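/- If t is a badly approximable irrational in (0,1), then there exists a constant c_t > 0 such that for all n sufficiently large and every z ∈ [0,1+t], distinct words a, a' ∈ {1,2,3,4}^n satisfy |φ_a(z) − φ_{a'}(z)| > c_t/4^n. -/

import Mathlib

/-- The four maps of the IFS `Φ_t`. -/
noncomputable def phiMap (t : ℝ) : Fin 4 → ℝ → ℝ :=
  ![fun x => x / 2, fun x => (x + 1) / 2, fun x => (x + t) / 2, fun x => (x + 1 + t) / 2]

/-- Composition of the IFS maps along a word, `φ_a = φ_{a_1} ∘ ⋯ ∘ φ_{a_n}`. -/
noncomputable def phiWord (t : ℝ) (a : List (Fin 4)) : ℝ → ℝ :=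
  a.foldr (fun i f => phiMap t i ∘ f) id

def uDig : Fin 4 → ℕ := ![0, 1, 0, 1]
def vDig : Fin 4 → ℕ := ![0, 0, 1, 1]

lemma uDig_le (i : Fin 4) : uDig i ≤ 1 := by fin_cases i <;> simp [uDig]
lemma vDig_le (i : Fin 4) : vDig i ≤ 1 := by fin_cases i <;> simp [vDig]

lemma phiMap_eq (t : ℝ) (i : Fin 4) (x : ℝ) :
    phiMap t i x = (x + uDig i + vDig i * t) / 2 := by
  fin_cases i <;> simp [phiMap, uDig, vDig] <;> ring

def natA : List (Fin 4) → ℕ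
  | [] => 0
  | i :: rest => uDig i * 2 ^ rest.length + natA rest

def natB : List (Fin 4) → ℕ
  | [] => 0
  | i :: rest => vDig i * 2 ^ rest.length + natB rest

lemma natA_lt : ∀ a : List (Fin 4), natA a < 2 ^ a.length
  | [] => by simp [natA]
  | i :: rest => by
    have h1 := natA_lt rest
    have h2 := uDig_le i
    simp only [natA, List.length_cons, pow_succ]
    nlinarith [pow_pos (by norm_num : (0:ℕ) < 2) rest.length]

lemma natB_lt : ∀ a : List (Fin 4), natB a < 2 ^ a.length
  | [] => by simp [natB]
  | i :: rest => by
    have h1 := natB_lt rest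
    have h2 := vDig_le i
    simp only [natB, List.length_cons, pow_succ]
    nlinarith [pow_pos (by norm_num : (0:ℕ) < 2) rest.length]

lemma phiWord_eq (t : ℝ) :
    ∀ (a : List (Fin 4)) (z : ℝ),
      phiWord t a z = (z + natA a + natB a * t) / 2 ^ a.length
  | [], z => by simp [phiWord, natA, natB]
  | i :: rest, z => by
    have ih := phiWord_eq t rest z
    have : phiWord t (i :: rest) z = phiMap t i (phiWord t rest z) := rfl
    rw [this, ih, phiMap_eq]
    have hpos : (0:ℝ) < 2 ^ rest.length := by positivity
    simp only [natA, natB, List.length_cons, pow_succ]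
    push_cast
    field_simp
    ring

lemma word_inj : ∀ (a b : List (Fin 4)), a.length = b.length →
    natA a = natA b → natB a = natB b → a = b
  | [], [], _, _, _ => rfl
  | [], j :: b, h, _, _ => by simp at h
  | i :: a, [], h, _, _ => by simp at h
  | i :: a, j :: b, hlen, hA, hB => by
    have hlen' : a.length = b.length := by simpa using hlen
    have hAa := natA_lt a
    have hAb := natA_lt b
    have hBa := natB_lt a
    have hBb := natB_lt b
    rw [hlen'] at hAa hBa
    simp only [natA, natB, hlen'] at hA hB
    set M := 2 ^ b.length with hM
    have hMpos : 0 < M := pow_pos (by norm_num) _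
    have hij : i = j ∧ natA a = natA b ∧ natB a = natB b := by
      fin_cases i <;> fin_cases j <;>
        simp_all [uDig, vDig] <;> omega
    obtain ⟨hij, hA', hB'⟩ := hij
    rw [hij, word_inj a b hlen' hA' hB']

/-- If `t` is a badly approximable irrational in `(0,1)`, there is `c_t > 0` such that for all
large `n`, the level-`n` images of any `z ∈ [0,1+t]` are `c_t/4^n`-separated. -/
theorem badly_approximable_separation (t : ℝ) (ht : Irrational t)
    (ht01 : t ∈ Set.Ioo (0:ℝ) 1)
    (hbad : ∃ c > (0:ℝ), ∀ p : ℤ, ∀ q : ℕ, 0 < q → c / (q : ℝ) ^ 2 ≤ |t - (p : ℝ) / (q : ℝ)|) :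
    ∃ c > (0:ℝ), ∃ N : ℕ, ∀ n ≥ N, ∀ z ∈ Set.Icc (0:ℝ) (1 + t),
      ∀ a a' : Fin n → Fin 4, a ≠ a' →
        c / 4 ^ n < |phiWord t (List.ofFn a) z - phiWord t (List.ofFn a') z| := by
  obtain ⟨c, hc, hbad⟩ := hbad
  refine ⟨min 1 c / 2, by positivity, 0, fun n _ z _ a a' hne => ?_⟩
  set L := List.ofFn a with hL
  set L' := List.ofFn a' with hL'
  have hlen : L.length = n := by simp [hL]
  have hlen' : L'.length = n := by simp [hL']
  have hLne : L ≠ L' := fun h => hne (List.ofFn_injective h)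
  set A := natA L; set B := natB L; set A' := natA L'; set B' := natB L'
  have hABne : ¬(A = A' ∧ B = B') := by
    rintro ⟨h1, h2⟩
    exact hLne (word_inj L L' (hlen.trans hlen'.symm) h1 h2)
  set P : ℤ := (A : ℤ) - A' with hP
  set Q : ℤ := (B : ℤ) - B' with hQ
  have hPQ : ¬(P = 0 ∧ Q = 0) := by
    rintro ⟨h1, h2⟩
    exact hABne ⟨by omega, by omega⟩
  -- bounds on Q
  have hBlt : B < 2 ^ n := hlen ▸ natB_lt L
  have hB'lt : B' < 2 ^ n := hlen' ▸ natB_lt L'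
  have hQbound : Q.natAbs ≤ 2 ^ n := by
    have h1 : (B : ℤ) < 2 ^ n := by exact_mod_cast hBlt
    have h2 : (B' : ℤ) < 2 ^ n := by exact_mod_cast hB'lt
    omega
  -- the difference
  have h2pos : (0:ℝ) < 2 ^ n := by positivity
  have hdiff : phiWord t L z - phiWord t L' z = ((P : ℝ) + (Q : ℝ) * t) / 2 ^ n := by
    rw [phiWord_eq, phiWord_eq, hlen, hlen']
    push_cast [hP, hQ]
    field_simp
    ring
  -- lower bound on |P + Q t|
  have hkey : min 1 c / 2 ^ n ≤ |(P : ℝ) + (Q : ℝ) * t| := by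
    rcases eq_or_ne Q 0 with hQ0 | hQ0
    · have hP0 : P ≠ 0 := fun h => hPQ ⟨h, hQ0⟩
      have h1 : (1:ℝ) ≤ |(P : ℝ)| := by
        have : (1:ℤ) ≤ |P| := Int.one_le_abs hP0
        calc (1:ℝ) ≤ ((|P| : ℤ) : ℝ) := by exact_mod_cast this
        _ = |(P:ℝ)| := by push_cast; simp
      have : min 1 c / 2 ^ n ≤ 1 := by
        rw [div_le_one h2pos]
        exact le_trans (min_le_left _ _) (one_le_pow₀ (by norm_num))
      rw [hQ0]
      push_cast
      simpa using le_trans this h1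
    · -- Q ≠ 0 : use badly approximable
      set q : ℕ := Q.natAbs with hq
      have hqpos : 0 < q := Int.natAbs_pos.mpr hQ0
      set p : ℤ := -(P * Q.sign) with hp
      have hqR : (0:ℝ) < (q : ℝ) := by exact_mod_cast hqpos
      have hQRne : (Q : ℝ) ≠ 0 := Int.cast_ne_zero.mpr hQ0
      have hfrac : (p : ℝ) / (q : ℝ) = -(P : ℝ) / (Q : ℝ) := by
        rcases lt_or_gt_of_ne hQ0 with h | h
        · have hs : Q.sign = -1 := Int.sign_eq_neg_one_of_neg h
          have hqQ : (q : ℤ) = -Q := by omega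
          rw [hp, hs]
          have : ((q : ℤ) : ℝ) = -(Q : ℝ) := by exact_mod_cast congrArg Int.cast hqQ
          push_cast at this ⊢
          rw [this, div_neg]; ring
        · have hs : Q.sign = 1 := Int.sign_eq_one_of_pos h
          have hqQ : (q : ℤ) = Q := by omega
          rw [hp, hs]
          have : ((q : ℤ) : ℝ) = (Q : ℝ) := by exact_mod_cast congrArg Int.cast hqQ
          push_cast at this ⊢
          rw [this]
          ring
      have hbad' := hbad p q hqpos
      rw [hfrac] at hbad'
      have hQR : (Q : ℝ) ≠ 0 := Int.cast_ne_zero.mpr hQ0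
      have habsQ : |(Q : ℝ)| = (q : ℝ) := by
        rw [hq]
        push_cast [Nat.cast_natAbs]
        simp
      have key1 : |(P : ℝ) + (Q : ℝ) * t| = |(Q : ℝ)| * |t - (-(P:ℝ)/(Q:ℝ))| := by
        rw [← abs_mul]
        congr 1
        field_simp
        ring
      have key2 : c / (q : ℝ) ≤ |(P : ℝ) + (Q : ℝ) * t| := by
        rw [key1, habsQ]
        have := mul_le_mul_of_nonneg_left hbad' (le_of_lt hqR)
        calc c / (q : ℝ) = (q : ℝ) * (c / (q:ℝ)^2) := by field_simp
        _ ≤ (q : ℝ) * |t - (-(P:ℝ)/(Q:ℝ))| := this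
      have hq2n : (q : ℝ) ≤ 2 ^ n := by
        exact_mod_cast hQbound
      calc min 1 c / 2 ^ n ≤ c / 2 ^ n := by
            gcongr
            exact min_le_right _ _
        _ ≤ c / (q : ℝ) := by gcongr
        _ ≤ _ := key2
  -- finish
  rw [hdiff, abs_div, abs_of_pos h2pos]
  have h4 : (4:ℝ) ^ n = 2 ^ n * 2 ^ n := by
    rw [← mul_pow]; norm_num
  have hmc : (0:ℝ) < min 1 c := lt_min one_pos hc
  calc min 1 c / 2 / 4 ^ n < min 1 c / 4 ^ n := by
        gcongr
        linarith
    _ = (min 1 c / 2 ^ n) / 2 ^ n := by rw [h4]; ring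
    _ ≤ _ := by gcongr
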